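/- Under the change of variables x_1 ↦ x_1' x_2', x_2 ↦ x_1'/x_2', Γ_1^2 ↦ Γ_1' Γ_2', Γ_2^2 ↦ Γ_1' (Γ_2')^{−1}, the B_2 Macdonald-type difference operator E_1^{(B_2)} = Σ_{ε=±1} Σ_{i=1}^2 (1−t x_i^ε)/(1−x_i^ε) · Π_{j≠i} (1−t x_i^ε x_j)/(1−x_i^ε x_j) · (t x_i^ε − x_j)/(x_i^ε − x_j) · Γ_i^{2ε} is mapped to the C_2 operator E_2^{(C_2)} = Σ_{ε_1,ε_2=±1} Π_{i=1}^2 (1−t x_i^{2ε_i})/(1−x_i^{2ε_i}) · (1 − t x_1^{ε_1} x_2^{ε_2})/(1 − x_1^{ε_1} x_2^{ε_2}) · Γ_1^{ε_1} Γ_2^{ε_2}. -/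

import Mathlib

set_option synthInstance.maxHeartbeats 1000000
set_option maxHeartbeats 2000000

noncomputable section

open MvPolynomial

/-- The base field `ℚ(q,t)`. -/
abbrev R8 : Type := FractionRing (MvPolynomial (Fin 2) ℚ)

/-- The Macdonald parameter `q`. -/
def q8 : R8 := algebraMap (MvPolynomial (Fin 2) ℚ) R8 (X 0)

/-- The Macdonald parameter `t`. -/
def t8 : R8 := algebraMap (MvPolynomial (Fin 2) ℚ) R8 (X 1)

lemma q8_ne_zero : q8 ≠ 0 := by
  simpa only [q8, ne_eq] using
    (map_ne_zero_iff _ (IsFractionRing.injective (MvPolynomial (Fin 2) ℚ) R8)).mpr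
      (X_ne_zero (R := ℚ) 0)

/-- Polynomials in the two variables `x_1, x_2`. -/
abbrev P8 : Type := MvPolynomial (Fin 2) R8

/-- The field of rational functions in `x_1, x_2` over `ℚ(q,t)` (Laurent series coefficients). -/
abbrev K8 : Type := FractionRing P8

/-- The substitution `x_j ↦ q^{v_j} x_j` on polynomials. -/
def shiftHom8 (v : Fin 2 → ℤ) : P8 →ₐ[R8] P8 := aeval fun j => C (q8 ^ v j) * X j

/-- The substitution `x_j ↦ q^{v_j} x_j` as an algebra automorphism. -/
def shiftEquiv8 (v : Fin 2 → ℤ) : P8 ≃ₐ[R8] P8 :=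
  AlgEquiv.ofAlgHom (shiftHom8 v) (shiftHom8 (-v))
    (by
      apply MvPolynomial.algHom_ext
      intro j
      simp [shiftHom8]
      rw [← mul_assoc, ← C_mul, inv_mul_cancel₀ (zpow_ne_zero _ q8_ne_zero), C_1, one_mul])
    (by
      apply MvPolynomial.algHom_ext
      intro j
      simp [shiftHom8]
      rw [← mul_assoc, ← C_mul, mul_inv_cancel₀ (zpow_ne_zero _ q8_ne_zero), C_1, one_mul])

/-- The `q`-shift operator `Γ_1^{v_1} Γ_2^{v_2}` (`Γ_i : x_i ↦ q x_i`) on rational functions. -/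
def Γ8 (v : Fin 2 → ℤ) : K8 ≃+* K8 :=
  IsFractionRing.ringEquivOfRingEquiv (shiftEquiv8 v).toRingEquiv

/-- The variable `x_i` inside `K8`. -/
def x8 (i : Fin 2) : K8 := algebraMap P8 K8 (X i)

/-- `t` inside `K8`. -/
def tK8 : K8 := algebraMap P8 K8 (C t8)

/-- The first-order `B_2` Macdonald operator
`E_1^{(B_2)} = Σ_{ε=±1} Σ_{i=1,2} (1−t x_i^ε)/(1−x_i^ε) · (1−t x_i^ε x_j)/(1−x_i^ε x_j) ·
(t x_i^ε − x_j)/(x_i^ε − x_j) · Γ_i^{2ε}`  (`j ≠ i`). -/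
def EB : K8 → K8 := fun f =>
  ∑ e ∈ ({1, -1} : Finset ℤ),
    (((1 - tK8 * x8 0 ^ e) / (1 - x8 0 ^ e)) *
        ((1 - tK8 * (x8 0 ^ e * x8 1)) / (1 - x8 0 ^ e * x8 1)) *
        ((tK8 * x8 0 ^ e - x8 1) / (x8 0 ^ e - x8 1)) * Γ8 ![2 * e, 0] f +
      ((1 - tK8 * x8 1 ^ e) / (1 - x8 1 ^ e)) *
        ((1 - tK8 * (x8 1 ^ e * x8 0)) / (1 - x8 1 ^ e * x8 0)) *
        ((tK8 * x8 1 ^ e - x8 0) / (x8 1 ^ e - x8 0)) * Γ8 ![0, 2 * e] f)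

/-- The `C_2` Macdonald operator
`E_2^{(C_2)} = Σ_{ε_1,ε_2=±1} Π_i (1−t x_i^{2ε_i})/(1−x_i^{2ε_i}) ·
(1−t x_1^{ε_1}x_2^{ε_2})/(1−x_1^{ε_1}x_2^{ε_2}) · Γ_1^{ε_1} Γ_2^{ε_2}`. -/
def EC : K8 → K8 := fun f =>
  ∑ e1 ∈ ({1, -1} : Finset ℤ), ∑ e2 ∈ ({1, -1} : Finset ℤ),
    ((1 - tK8 * x8 0 ^ (2 * e1)) / (1 - x8 0 ^ (2 * e1))) *
      ((1 - tK8 * x8 1 ^ (2 * e2)) / (1 - x8 1 ^ (2 * e2))) *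
      ((1 - tK8 * (x8 0 ^ e1 * x8 1 ^ e2)) / (1 - x8 0 ^ e1 * x8 1 ^ e2)) *
      Γ8 ![e1, e2] f

/-!
The `B₂` operator is a sum of four terms, `Γ_i^{2ε}` for `i = 1, 2` and `ε = ±1`, and the
substitution sends them to the four terms `Γ_1^{ε_1} Γ_2^{ε_2}` of the `C₂` operator, with
`(ε_1, ε_2) = (ε, ε)` for `i = 1` and `(ε, -ε)` for `i = 2`. It remains to match coefficients.
Writing `x_1 = ab`, `x_2 = a/b`, one has `x_1 x_2 = a²`, and the last factor
`(t x_1 − x_2)/(x_1 − x_2)` becomes `(1 − t b²)/(1 − b²)` after cancelling `a/b`; so the `B₂`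
coefficient is the `C₂` coefficient at `(a, b)`. The other three pairs reduce to this one,
since the `B₂` coefficient is invariant under `x_j ↦ x_j⁻¹`.
-/

section Coefficients

variable {K : Type*} [Field K]

/-- The coefficient of `Γ_i^{2ε}` in `E_1^{(B_2)}`, with `u = x_i^ε` and `v = x_j`. -/
def coeffB (t u v : K) : K :=
  (1 - t * u) / (1 - u) * ((1 - t * (u * v)) / (1 - u * v)) * ((t * u - v) / (u - v))

/-- The coefficient of `Γ_1^{ε_1} Γ_2^{ε_2}` in `E_2^{(C_2)}`, with `a = x_1^{ε_1}`,
`b = x_2^{ε_2}`. -/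
def coeffC (t a b : K) : K :=
  (1 - t * a ^ 2) / (1 - a ^ 2) * ((1 - t * b ^ 2) / (1 - b ^ 2)) *
    ((1 - t * (a * b)) / (1 - a * b))

lemma map_coeffB {L : Type*} [Field L] (φ : K →+* L) (t u v : K) :
    φ (coeffB t u v) = coeffB (φ t) (φ u) (φ v) := by
  simp only [coeffB, map_mul, map_div₀, map_sub, map_one]

lemma coeffB_inv_right (t u : K) {v : K} (hv : v ≠ 0) : coeffB t u v⁻¹ = coeffB t u v := by
  have hmid : (1 - t * (u * v⁻¹)) / (1 - u * v⁻¹) = (t * u - v) / (u - v) := by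
    rw [← neg_div_neg_eq (t * u - v), ← mul_div_mul_left (-(t * u - v)) _ (inv_ne_zero hv)]
    congr 1 <;> field_simp <;> ring
  have hlast : (t * u - v⁻¹) / (u - v⁻¹) = (1 - t * (u * v)) / (1 - u * v) := by
    rw [← neg_div_neg_eq (1 - t * (u * v)),
      ← mul_div_mul_left (-(1 - t * (u * v))) _ (inv_ne_zero hv)]
    congr 1 <;> field_simp <;> ring
  rw [coeffB, coeffB, hmid, hlast, mul_assoc, mul_assoc, mul_comm ((t * u - v) / (u - v))]

lemma coeffB_mul_div (t : K) {a b : K} (ha : a ≠ 0) (hb : b ≠ 0) :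
    coeffB t (a * b) (a / b) = coeffC t a b := by
  have hprod : a * b * (a / b) = a ^ 2 := by field_simp
  have hlast : (t * (a * b) - a / b) / (a * b - a / b) = (1 - t * b ^ 2) / (1 - b ^ 2) := by
    rw [← neg_div_neg_eq (1 - t * b ^ 2),
      ← mul_div_mul_left (-(1 - t * b ^ 2)) _ (div_ne_zero ha hb)]
    congr 1 <;> field_simp <;> ring
  rw [coeffB, coeffC, hprod, hlast]
  ring

lemma coeffB_mul_div_swap (t : K) {a b : K} (ha : a ≠ 0) (hb : b ≠ 0) :
    coeffB t (a * b) (b / a) = coeffC t a b := by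
  rw [← inv_div, coeffB_inv_right t _ (div_ne_zero ha hb), coeffB_mul_div t ha hb]

lemma coeffB_zpow_mul_div {t a b : K} (ha : a ≠ 0) (hb : b ≠ 0) {e : ℤ}
    (he : e ∈ ({1, -1} : Finset ℤ)) :
    coeffB t ((a * b) ^ e) (a / b) = coeffC t (a ^ e) (b ^ e) := by
  obtain rfl | rfl : e = 1 ∨ e = -1 := by simpa using he
  · simpa only [zpow_one] using coeffB_mul_div t ha hb
  · have hv : a / b = b⁻¹ / a⁻¹ := by rw [inv_div_inv]
    simpa only [zpow_neg_one, mul_inv, ← hv] using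
      coeffB_mul_div_swap t (inv_ne_zero ha) (inv_ne_zero hb)

lemma coeffB_zpow_div_mul {t a b : K} (ha : a ≠ 0) (hb : b ≠ 0) {e : ℤ}
    (he : e ∈ ({1, -1} : Finset ℤ)) :
    coeffB t ((a / b) ^ e) (a * b) = coeffC t (a ^ e) (b ^ (-e)) := by
  obtain rfl | rfl : e = 1 ∨ e = -1 := by simpa using he
  · simpa only [zpow_one, zpow_neg_one, div_inv_eq_mul, ← div_eq_mul_inv] using
      coeffB_mul_div t ha (inv_ne_zero hb)
  · simpa only [zpow_neg_one, neg_neg, zpow_one, inv_div, div_inv_eq_mul, ← div_eq_inv_mul,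
      mul_comm b a] using coeffB_mul_div_swap t (inv_ne_zero ha) hb

end Coefficients

lemma Finset.sum_one_neg_one_eq {M : Type*} [AddCommMonoid M] (F : ℤ → M) {e : ℤ}
    (he : e ∈ ({1, -1} : Finset ℤ)) :
    ∑ e' ∈ ({1, -1} : Finset ℤ), F e' = F e + F (-e) := by
  obtain rfl | rfl : e = 1 ∨ e = -1 := by simpa using he
  · simp
  · simp [add_comm]

lemma x8_ne_zero (i : Fin 2) : x8 i ≠ 0 :=
  (map_ne_zero_iff _ (IsFractionRing.injective P8 K8)).mpr (X_ne_zero i)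

lemma EB_eq_sum_coeffB (f : K8) :
    EB f = ∑ e ∈ ({1, -1} : Finset ℤ),
      (coeffB tK8 (x8 0 ^ e) (x8 1) * Γ8 ![2 * e, 0] f +
        coeffB tK8 (x8 1 ^ e) (x8 0) * Γ8 ![0, 2 * e] f) :=
  rfl

lemma EC_eq_sum_coeffC (f : K8) :
    EC f = ∑ e1 ∈ ({1, -1} : Finset ℤ), ∑ e2 ∈ ({1, -1} : Finset ℤ),
      coeffC tK8 (x8 0 ^ e1) (x8 1 ^ e2) * Γ8 ![e1, e2] f := by
  simp only [EC, coeffC, zpow_mul', zpow_ofNat]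

/-- under the change of variables `x_1 ↦ x_1' x_2'`, `x_2 ↦ x_1'/x_2'`,
`Γ_1² ↦ Γ_1' Γ_2'`, `Γ_2² ↦ Γ_1' (Γ_2')^{−1}` (any substitution homomorphism `φ` fixing `q,t`
and realizing these assignments), the `B_2` Macdonald operator `E_1^{(B_2)}` is mapped to the
`C_2` Macdonald operator `E_2^{(C_2)}`, i.e. `φ ∘ E_1^{(B_2)} = E_2^{(C_2)} ∘ φ`. -/
theorem stmt8 (φ : K8 →+* K8)
    (hconst : ∀ r : R8, φ (algebraMap P8 K8 (C r)) = algebraMap P8 K8 (C r))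
    (hx1 : φ (x8 0) = x8 0 * x8 1)
    (hx2 : φ (x8 1) = x8 0 / x8 1)
    (hG1 : ∀ (e : ℤ) (f : K8), φ (Γ8 ![2 * e, 0] f) = Γ8 ![e, e] (φ f))
    (hG2 : ∀ (e : ℤ) (f : K8), φ (Γ8 ![0, 2 * e] f) = Γ8 ![e, -e] (φ f)) :
    ∀ f : K8, φ (EB f) = EC (φ f) := by
  intro f
  have ht : φ tK8 = tK8 := hconst t8
  rw [EB_eq_sum_coeffB, EC_eq_sum_coeffC, map_sum]
  refine Finset.sum_congr rfl fun e he => ?_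
  rw [Finset.sum_one_neg_one_eq _ he]
  simp only [map_add, map_mul, map_coeffB, map_zpow₀, ht, hx1, hx2, hG1, hG2,
    coeffB_zpow_mul_div (x8_ne_zero 0) (x8_ne_zero 1) he,
    coeffB_zpow_div_mul (x8_ne_zero 0) (x8_ne_zero 1) he]
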